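/- Let y^1,…,y^L (L ≥ 2) be random variables each taking values in a finite set. Then the dual total correlation dominates every 'one-versus-rest' mutual information: for every i ∈ {1,…,L}, D(y) ≥ I(y^i ; y^{[L]∖i}); consequently D(y) ≥ max_{1≤i≤L} I(y^i ; y^{[L]∖i}). -/

import Mathlib

open MeasureTheory Real

/-- Shannon entropy of a finite-valued random variable `X`, computed from its
distribution under `μ`. -/
noncomputable def entropy {Ω S : Type*} [MeasurableSpace Ω] [Fintype S]
    (μ : Measure Ω) (X : Ω → S) : ℝ :=
  ∑ x : S, Real.negMulLog ((μ (X ⁻¹' {x})).toReal)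

/-- Conditional Shannon entropy `H(X | Y)` of finite-valued random variables. -/
noncomputable def condEntropy {Ω S T : Type*} [MeasurableSpace Ω] [Fintype S] [Fintype T]
    (μ : Measure Ω) (X : Ω → S) (Y : Ω → T) : ℝ :=
  ∑ x : S, ∑ t : T,
    (μ (X ⁻¹' {x} ∩ Y ⁻¹' {t})).toReal *
      Real.log ((μ (Y ⁻¹' {t})).toReal / (μ (X ⁻¹' {x} ∩ Y ⁻¹' {t})).toReal)


/-- Mutual information `I(X;Y) = H(X) + H(Y) - H(X,Y)`. -/
noncomputable def mutualInfo {Ω S T : Type*} [MeasurableSpace Ω] [Fintype S] [Fintype T]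
    (μ : Measure Ω) (X : Ω → S) (Y : Ω → T) : ℝ :=
  entropy μ X + entropy μ Y - entropy μ (fun ω => (X ω, Y ω))

/-!
Write `H` for the joint entropy of `y` and `Cⱼ = H(yʲ | y^{[L]∖j})`, so that the chain rule gives
`H(y^{[L]∖j}) = H - Cⱼ` and hence `D(y) - I(yⁱ ; y^{[L]∖i}) = H - H(yⁱ) - ∑_{j ≠ i} Cⱼ`.
Adding the coordinates `j ≠ i` to `yⁱ` one at a time, the chain rule writes `H - H(yⁱ)` as a sum of
entropies of `yʲ` conditioned on `yⁱ` and the coordinates added before it; each of these is at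
least `Cⱼ`, because conditioning on more variables can only decrease entropy (the log-sum
inequality).
-/

namespace Real

-- No side conditions: both sides vanish when `a = 0` or `b = 0`, as `x / 0 = 0` and `log 0 = 0`.
lemma mul_negMulLog_div (a b : ℝ) : b * negMulLog (a / b) = a * log (b / a) := by
  rcases eq_or_ne a 0 with rfl | ha
  · simp
  rcases eq_or_ne b 0 with rfl | hb
  · simp
  rw [negMulLog, ← inv_div, log_inv]
  field_simp

lemma sum_negMulLog_eq_negMulLog_sum_add {ι : Type*} (s : Finset ι) (p : ι → ℝ)
    (hp : ∀ i ∈ s, 0 ≤ p i) :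
    ∑ i ∈ s, negMulLog (p i) =
      negMulLog (∑ i ∈ s, p i) + ∑ i ∈ s, p i * log ((∑ i ∈ s, p i) / p i) := by
  set q := ∑ i ∈ s, p i
  have hterm : ∀ i ∈ s, negMulLog (p i) = -(p i * log q) + p i * log (q / p i) := by
    intro i hi
    rcases (hp i hi).eq_or_lt with hpi | hpi
    · simp [← hpi]
    have hq : 0 < q := hpi.trans_le (Finset.single_le_sum hp hi)
    rw [log_div hq.ne' hpi.ne', negMulLog]
    ring
  rw [Finset.sum_congr rfl hterm, Finset.sum_add_distrib, Finset.sum_neg_distrib,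
    ← Finset.sum_mul, negMulLog, neg_mul]

theorem sum_mul_log_div_le {ι : Type*} (s : Finset ι) (a b : ι → ℝ)
    (ha : ∀ i ∈ s, 0 ≤ a i) (hb : ∀ i ∈ s, 0 ≤ b i) (hab : ∀ i ∈ s, b i = 0 → a i = 0) :
    ∑ i ∈ s, a i * log (b i / a i) ≤
      (∑ i ∈ s, a i) * log ((∑ i ∈ s, b i) / ∑ i ∈ s, a i) := by
  set A := ∑ i ∈ s, a i
  set B := ∑ i ∈ s, b i
  rcases (Finset.sum_nonneg hb : 0 ≤ B).eq_or_lt with hB | hB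
  · have ha0 : ∀ i ∈ s, a i = 0 := fun i hi =>
      hab i hi ((Finset.sum_eq_zero_iff_of_nonneg hb).1 hB.symm i hi)
    have hA : A = 0 := Finset.sum_eq_zero ha0
    rw [hA, zero_mul, Finset.sum_eq_zero fun i hi => by rw [ha0 i hi, zero_mul]]
  have hweights : ∑ i ∈ s, b i / B = 1 := by
    rw [← Finset.sum_div, div_self hB.ne']
  have hmean : ∑ i ∈ s, (b i / B) • (a i / b i) = A / B := by
    rw [Finset.sum_div]
    refine Finset.sum_congr rfl fun i hi => ?_
    rcases eq_or_ne (b i) 0 with hbi | hbi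
    · simp [hbi, hab i hi hbi]
    · rw [smul_eq_mul]
      field_simp
  have hJensen := concaveOn_negMulLog.le_map_sum (t := s) (w := fun i => b i / B)
    (p := fun i => a i / b i) (fun i hi => div_nonneg (hb i hi) hB.le) hweights
    (fun i hi => Set.mem_Ici.2 (div_nonneg (ha i hi) (hb i hi)))
  calc ∑ i ∈ s, a i * log (b i / a i)
      = B * ∑ i ∈ s, (b i / B) • negMulLog (a i / b i) := by
        simp_rw [← mul_negMulLog_div, Finset.mul_sum, smul_eq_mul]
        exact Finset.sum_congr rfl fun i _ => by rw [← mul_assoc, mul_div_cancel₀ _ hB.ne']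
    _ ≤ B * negMulLog (A / B) := by
        rw [← hmean]; exact mul_le_mul_of_nonneg_left hJensen hB.le
    _ = A * log (B / A) := mul_negMulLog_div A B

end Real

section FiniteEntropy

variable {Ω S T U : Type*} [MeasurableSpace Ω] (μ : Measure Ω)

lemma entropy_comp_of_injective [Fintype S] [Fintype T] (X : Ω → S) {f : S → T}
    (hf : Function.Injective f) :
    entropy μ (f ∘ X) = entropy μ X := by
  classical
  refine (Fintype.sum_of_injective f hf _ _ (fun t ht => ?_) fun x => ?_).symm
  · have hempty : (f ∘ X) ⁻¹' {t} = ∅ :=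
      Set.eq_empty_of_forall_notMem fun ω hω => ht ⟨X ω, hω⟩
    simp [hempty]
  · rw [Set.preimage_comp, ← Set.image_singleton, hf.preimage_image]

variable {μ} [IsFiniteMeasure μ] [MeasurableSpace S] [MeasurableSingletonClass S]

lemma measureReal_inter_preimage_eq_sum {X : Ω → S} (hX : Measurable X)
    {B : Set Ω} (hB : MeasurableSet B) (s : Finset S) :
    (μ (B ∩ X ⁻¹' s)).toReal = ∑ x ∈ s, (μ (B ∩ X ⁻¹' {x})).toReal := by
  have hunion : B ∩ X ⁻¹' s = ⋃ x ∈ s, B ∩ X ⁻¹' {x} := by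
    rw [← Set.inter_iUnion₂, Finset.set_biUnion_preimage_singleton]
  rw [hunion]
  exact measureReal_biUnion_finset
    ((Set.pairwiseDisjoint_fiber X s).mono fun x => Set.inter_subset_right)
    fun x _ => hB.inter (hX (measurableSet_singleton x))

lemma measureReal_inter_comp_preimage_eq_sum [Fintype S] [DecidableEq T]
    {W : Ω → S} (hW : Measurable W) {B : Set Ω} (hB : MeasurableSet B) (f : S → T) (t : T) :
    (μ (B ∩ (f ∘ W) ⁻¹' {t})).toReal =
      ∑ w with f w = t, (μ (B ∩ W ⁻¹' {w})).toReal := by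
  rw [← measureReal_inter_preimage_eq_sum hW hB]
  congr 3
  ext ω
  simp

variable (μ) [Fintype S] [Fintype T]

lemma entropy_prod_eq_add_condEntropy [MeasurableSpace T] [MeasurableSingletonClass T]
    {X : Ω → S} {Y : Ω → T} (hX : Measurable X) (hY : Measurable Y) :
    entropy μ (fun ω => (X ω, Y ω)) = entropy μ Y + condEntropy μ X Y := by
  have hgroup : ∀ t : T, ∑ x : S, negMulLog (μ (X ⁻¹' {x} ∩ Y ⁻¹' {t})).toReal =
      negMulLog (μ (Y ⁻¹' {t})).toReal + ∑ x : S, (μ (X ⁻¹' {x} ∩ Y ⁻¹' {t})).toReal *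
        log ((μ (Y ⁻¹' {t})).toReal / (μ (X ⁻¹' {x} ∩ Y ⁻¹' {t})).toReal) := by
    intro t
    have hmarginal : (μ (Y ⁻¹' {t})).toReal = ∑ x : S, (μ (X ⁻¹' {x} ∩ Y ⁻¹' {t})).toReal := by
      simpa [Set.inter_comm] using
        measureReal_inter_preimage_eq_sum hX (hY (measurableSet_singleton t)) Finset.univ
    rw [hmarginal]
    exact sum_negMulLog_eq_negMulLog_sum_add _ _ fun x _ => ENNReal.toReal_nonneg
  have hpair : ∀ x t, (fun ω => (X ω, Y ω)) ⁻¹' {(x, t)} = X ⁻¹' {x} ∩ Y ⁻¹' {t} := by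
    intro x t; ext ω; simp
  simp only [entropy, condEntropy, Fintype.sum_prod_type, hpair]
  rw [Finset.sum_comm, Finset.sum_congr rfl fun t _ => hgroup t, Finset.sum_add_distrib,
    Finset.sum_comm (s := Finset.univ (α := T))]

lemma condEntropy_le_condEntropy_comp [Fintype U] [MeasurableSpace U]
    [MeasurableSingletonClass U] {X : Ω → S} {W : Ω → U} (hX : Measurable X)
    (hW : Measurable W) (f : U → T) :
    condEntropy μ X W ≤ condEntropy μ X (f ∘ W) := by
  classical
  refine Finset.sum_le_sum fun x _ => ?_
  have hXx : MeasurableSet (X ⁻¹' {x}) := hX (measurableSet_singleton x)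
  calc ∑ w : U, (μ (X ⁻¹' {x} ∩ W ⁻¹' {w})).toReal *
        log ((μ (W ⁻¹' {w})).toReal / (μ (X ⁻¹' {x} ∩ W ⁻¹' {w})).toReal)
      = ∑ t : T, ∑ w with f w = t, (μ (X ⁻¹' {x} ∩ W ⁻¹' {w})).toReal *
        log ((μ (W ⁻¹' {w})).toReal / (μ (X ⁻¹' {x} ∩ W ⁻¹' {w})).toReal) :=
        (Finset.sum_fiberwise _ _ _).symm
    _ ≤ ∑ t : T, (μ (X ⁻¹' {x} ∩ (f ∘ W) ⁻¹' {t})).toReal *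
        log ((μ ((f ∘ W) ⁻¹' {t})).toReal / (μ (X ⁻¹' {x} ∩ (f ∘ W) ⁻¹' {t})).toReal) := by
        refine Finset.sum_le_sum fun t _ => ?_
        rw [measureReal_inter_comp_preimage_eq_sum hW hXx, ← Set.univ_inter ((f ∘ W) ⁻¹' _),
          measureReal_inter_comp_preimage_eq_sum hW MeasurableSet.univ]
        simp only [Set.univ_inter]
        exact sum_mul_log_div_le _ _ _ (fun w _ => ENNReal.toReal_nonneg)
          (fun w _ => ENNReal.toReal_nonneg) fun w _ hw =>
            measureReal_mono_null Set.inter_subset_right hw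

end FiniteEntropy

section Tuples

variable {Ω ι : Type*} [MeasurableSpace Ω] (μ : Measure Ω) [DecidableEq ι]
  {S : ι → Type*} [∀ i, Fintype (S i)] {y : ∀ i, Ω → S i}

lemma entropy_restrict_singleton (i : ι) :
    entropy μ (fun ω => ({i} : Finset ι).restrict (y · ω)) = entropy μ (y i) := by
  have hinj : Function.Injective fun v : ∀ k : ({i} : Finset ι), S k =>
      v ⟨i, Finset.mem_singleton_self i⟩ := by
    rintro v w h
    funext ⟨k, hk⟩
    obtain rfl := Finset.mem_singleton.1 hk
    exact h
  exact (entropy_comp_of_injective μ _ hinj).symm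

lemma entropy_restrict_univ [Fintype ι] :
    entropy μ (fun ω => (Finset.univ : Finset ι).restrict (y · ω)) =
      entropy μ (fun ω k => y k ω) := by
  have hinj : Function.Injective fun (v : ∀ k : (Finset.univ : Finset ι), S k) k =>
      v ⟨k, Finset.mem_univ k⟩ := by
    rintro v w h
    funext ⟨k, hk⟩
    exact congrFun h k
  exact (entropy_comp_of_injective μ _ hinj).symm

lemma entropy_prod_rest [Fintype ι] (j : ι) :
    entropy μ (fun ω => (y j ω, fun k : {k // k ≠ j} => y k ω)) =
      entropy μ (fun ω k => y k ω) := by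
  have hinj : Function.Injective fun v : ∀ k, S k => (v j, fun k : {k // k ≠ j} => v k) := by
    rintro v w h
    funext k
    by_cases hk : k = j
    · subst hk
      exact congrArg Prod.fst h
    · exact congrFun (congrArg Prod.snd h) ⟨k, hk⟩
  exact entropy_comp_of_injective μ (fun ω k => y k ω) hinj

variable (y) in
noncomputable def dualTotalCorrelation [Fintype ι] : ℝ :=
  ∑ j : ι, entropy μ (fun ω (k : {k // k ≠ j}) => y k ω) -
    (Fintype.card ι - 1 : ℝ) * entropy μ (fun ω k => y k ω)

variable [IsFiniteMeasure μ] [∀ i, MeasurableSpace (S i)] [∀ i, MeasurableSingletonClass (S i)]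

lemma entropy_restrict_insert (hy : ∀ i, Measurable (y i)) (A : Finset ι) (j : ι) :
    entropy μ (fun ω => (insert j A).restrict (y · ω)) =
      entropy μ (fun ω => A.restrict (y · ω)) +
        condEntropy μ (y j) (fun ω => A.restrict (y · ω)) := by
  have hinj : Function.Injective fun v : ∀ k : (insert j A : Finset ι), S k =>
      (v ⟨j, Finset.mem_insert_self j A⟩, Finset.restrict₂ (Finset.subset_insert j A) v) := by
    rintro v w h
    funext ⟨k, hk⟩
    rcases Finset.mem_insert.1 hk with rfl | hk
    · exact congrArg Prod.fst h
    · exact congrFun (congrArg Prod.snd h) ⟨k, hk⟩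
  exact (entropy_comp_of_injective μ _ hinj).symm.trans
    (entropy_prod_eq_add_condEntropy μ (hy j) (measurable_pi_lambda _ fun k => hy k))

variable [Fintype ι]

lemma entropy_eq_entropy_rest_add_condEntropy (hy : ∀ i, Measurable (y i)) (j : ι) :
    entropy μ (fun ω k => y k ω) =
      entropy μ (fun ω (k : {k // k ≠ j}) => y k ω) +
        condEntropy μ (y j) (fun ω (k : {k // k ≠ j}) => y k ω) := by
  rw [← entropy_prod_rest]
  exact entropy_prod_eq_add_condEntropy μ (hy j) (measurable_pi_lambda _ fun k => hy k)

lemma condEntropy_rest_le_condEntropy_restrict (hy : ∀ i, Measurable (y i)) {A : Finset ι}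
    {j : ι} (hj : j ∉ A) :
    condEntropy μ (y j) (fun ω (k : {k // k ≠ j}) => y k ω) ≤
      condEntropy μ (y j) (fun ω => A.restrict (y · ω)) :=
  condEntropy_le_condEntropy_comp μ (hy j)
    (measurable_pi_lambda (fun ω (k : {k // k ≠ j}) => y k ω) fun k => hy k)
    fun (v : ∀ k : {k // k ≠ j}, S k) (k : A) => v ⟨k, fun h => hj (h ▸ k.2)⟩

lemma entropy_add_sum_condEntropy_rest_le_entropy_restrict (hy : ∀ i, Measurable (y i))
    {i : ι} {A : Finset ι} (hi : i ∉ A) :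
    entropy μ (y i) + ∑ j ∈ A, condEntropy μ (y j) (fun ω (k : {k // k ≠ j}) => y k ω) ≤
      entropy μ (fun ω => (insert i A).restrict (y · ω)) := by
  induction A using Finset.induction_on with
  | empty => rw [Finset.sum_empty, add_zero, Finset.insert_empty, entropy_restrict_singleton]
  | insert j A hj ih =>
    rw [Finset.mem_insert, not_or] at hi
    obtain ⟨hij, hiA⟩ := hi
    have hcond := condEntropy_rest_le_condEntropy_restrict μ hy
      (A := insert i A) (j := j) (by simp [Ne.symm hij, hj])
    rw [Finset.sum_insert hj, Finset.insert_comm, entropy_restrict_insert μ hy]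
    linarith [ih hiA]

theorem mutualInfo_le_dualTotalCorrelation (hy : ∀ i, Measurable (y i)) (i : ι) :
    mutualInfo μ (y i) (fun ω (k : {k // k ≠ i}) => y k ω) ≤ dualTotalCorrelation μ y := by
  have hsplit := entropy_eq_entropy_rest_add_condEntropy μ hy
  have hchain := entropy_add_sum_condEntropy_rest_le_entropy_restrict μ hy
    (Finset.notMem_erase i Finset.univ)
  rw [Finset.insert_erase (Finset.mem_univ i), entropy_restrict_univ] at hchain
  have hrest : ∑ j : ι, entropy μ (fun ω (k : {k // k ≠ j}) => y k ω) =
      Fintype.card ι * entropy μ (fun ω k => y k ω) -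
        ∑ j : ι, condEntropy μ (y j) (fun ω (k : {k // k ≠ j}) => y k ω) := by
    rw [Finset.sum_congr rfl fun j _ => eq_sub_of_add_eq (hsplit j).symm, Finset.sum_sub_distrib,
      Finset.sum_const, Finset.card_univ, nsmul_eq_mul]
  rw [mutualInfo, dualTotalCorrelation, entropy_prod_rest, hrest,
    ← Finset.add_sum_erase _ _ (Finset.mem_univ i)]
  linarith [hsplit i]

end Tuples

/-- The dual total correlation `D(y) = ∑ᵢ H(y^{[L]∖i}) - (L-1)·H(y¹,…,y^L)` dominates
every "one-versus-rest" mutual information `I(yⁱ ; y^{[L]∖i})`, and in particular their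
maximum over `i`. -/
theorem dual_total_correlation_ge_mutualInfo
    {Ω : Type*} [MeasurableSpace Ω] (μ : Measure Ω) [IsProbabilityMeasure μ]
    (L : ℕ) (hL : 2 ≤ L)
    (S : Fin L → Type*) [∀ i, Fintype (S i)] [∀ i, MeasurableSpace (S i)]
    [∀ i, MeasurableSingletonClass (S i)]
    (y : ∀ i, Ω → S i) (hy : ∀ i, Measurable (y i)) :
    (∀ i : Fin L,
      (∑ i : Fin L, entropy μ (fun ω => fun j : {j : Fin L // j ≠ i} => y j.1 ω))
          - (L - 1 : ℝ) * entropy μ (fun ω => fun i => y i ω)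
        ≥ mutualInfo μ (y i) (fun ω => fun j : {j : Fin L // j ≠ i} => y j.1 ω)) ∧
    (∑ i : Fin L, entropy μ (fun ω => fun j : {j : Fin L // j ≠ i} => y j.1 ω))
        - (L - 1 : ℝ) * entropy μ (fun ω => fun i => y i ω)
      ≥ Finset.univ.sup' ⟨⟨0, by omega⟩, Finset.mem_univ _⟩
          (fun i : Fin L =>
            mutualInfo μ (y i) (fun ω => fun j : {j : Fin L // j ≠ i} => y j.1 ω)) := by
  have h := mutualInfo_le_dualTotalCorrelation μ hy
  simp only [dualTotalCorrelation, Fintype.card_fin] at h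
  exact ⟨h, Finset.sup'_le _ _ fun i _ => h i⟩
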